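/- Let (S,T) be a Cuntz-type representation of F_θ^+ on H (m ≥ 2 or n ≥ 2) and let 𝔖 be the unital WOT-closed algebra it generates. If there exist k,l > 0 such that the unital WOT-closed algebra 𝔖_{k,l} generated by {S_uT_v : |u|=k, |v|=l} is self-adjoint, then 𝔖 is self-adjoint. -/

import Mathlib

noncomputable section

open scoped InnerProductSpace ComplexInnerProductSpace Classical

section GeneralDefs

variable {E : Type*} [NormedAddCommGroup E] [InnerProductSpace ℂ E]

/-- The operator associated to a word: `wordOp V [a₁, …, a_r] = V a₁ * ⋯ * V a_r`. -/
def wordOp {ι : Type*} (V : ι → E →L[ℂ] E) (w : List ι) : E →L[ℂ] E :=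
  (w.map V).prod

/-- The operator associated to a word of fixed length `k` given as a function `Fin k → ι`. -/
def fnWordOp {ι : Type*} {k : ℕ} (V : ι → E →L[ℂ] E) (u : Fin k → ι) : E →L[ℂ] E :=
  wordOp V (List.ofFn u)

/-- The closure of a set of operators in the weak operator topology, described via
basic WOT-neighbourhoods (finitely many vector functionals). -/
def wotClosure (S : Set (E →L[ℂ] E)) : Set (E →L[ℂ] E) :=
  {A | ∀ ε > (0 : ℝ), ∀ F : Finset (E × E), ∃ B ∈ S, ∀ p ∈ F, ‖⟪p.1, (A - B) p.2⟫‖ < ε}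

/-- The unital WOT-closed algebra generated by a set of operators. -/
def genWotAlg (G : Set (E →L[ℂ] E)) : Set (E →L[ℂ] E) :=
  wotClosure ((Algebra.adjoin ℂ G : Subalgebra ℂ (E →L[ℂ] E)) : Set (E →L[ℂ] E))

/-- A wandering vector for a row-isometry `V = [V_a : a ∈ ι]`: a unit vector whose orbit
under all words in the `V_a` is an orthonormal family. -/
def IsWandering {ι : Type*} (V : ι → E →L[ℂ] E) (ζ : E) : Prop :=
  ‖ζ‖ = 1 ∧ ∀ w w' : List ι,
    ⟪wordOp V w ζ, wordOp V w' ζ⟫ = if w = w' then 1 else 0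

/-- Restriction of an operator to an invariant subspace (junk value `0` if not invariant). -/
def restrictCLM (A : E →L[ℂ] E) (M : Submodule ℂ E) : M →L[ℂ] M :=
  if h : ∀ x ∈ M, A x ∈ M then
    { toFun := fun x => ⟨A x, h x x.2⟩
      map_add' := by intro x y; ext; simp
      map_smul' := by intro c x; ext; simp
      cont := Continuous.subtype_mk (A.continuous.comp continuous_subtype_val) _ }
  else 0

/-- The unital WOT-closed algebra on `M` generated by the restrictions of the `V a` to `M`. -/
def rowAlgOn {ι : Type*} (V : ι → E →L[ℂ] E) (M : Submodule ℂ E) : Set (M →L[ℂ] M) :=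
  genWotAlg (Set.range fun a => restrictCLM (V a) M)

/-- The unital WOT-closed algebra on `M` generated by the restrictions of the `V a`
is self-adjoint. -/
def restrictedAlgSelfAdjoint {ι : Type*} (V : ι → E →L[ℂ] E) (M : Submodule ℂ E) : Prop :=
  ∀ A ∈ rowAlgOn V M, ∃ B ∈ rowAlgOn V M,
    ∀ x y : M, ⟪((A x : M) : E), (y : E)⟫ = ⟪(x : E), ((B y : M) : E)⟫

variable [CompleteSpace E]

/-- A row-isometry is of dilation type if it is defect free and has no nonzero reducing
subspace on which it is either absolutely continuous (spanned by wandering vectors) or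
singular (generating a self-adjoint WOT-closed algebra). -/
def IsDilationType {ι : Type*} [Fintype ι] (V : ι → E →L[ℂ] E) : Prop :=
  (∑ a, V a * star (V a)) = 1 ∧
    ¬ ∃ M : Submodule ℂ E, M ≠ ⊥ ∧ IsClosed (M : Set E) ∧
      (∀ a, ∀ x ∈ M, V a x ∈ M) ∧ (∀ a, ∀ x ∈ M, star (V a) x ∈ M) ∧
      ((M = (Submodule.span ℂ {ζ : E | ζ ∈ M ∧ IsWandering V ζ}).topologicalClosure) ∨
        restrictedAlgSelfAdjoint V M)

end GeneralDefs

/-- An isometric representation of the single-vertex 2-graph `F_θ⁺` on a Hilbert space `H`. -/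
structure TwoGraphRep (m n : ℕ) (θ : Equiv.Perm (Fin m × Fin n)) (H : Type*)
    [NormedAddCommGroup H] [InnerProductSpace ℂ H] [CompleteSpace H] where
  S : Fin m → H →L[ℂ] H
  T : Fin n → H →L[ℂ] H
  isometS : ∀ i i', star (S i) * S i' = if i = i' then 1 else 0
  isometT : ∀ j j', star (T j) * T j' = if j = j' then 1 else 0
  comm : ∀ i j, S i * T j = T (θ (i, j)).2 * S (θ (i, j)).1

namespace TwoGraphRep

variable {m n : ℕ} {θ : Equiv.Perm (Fin m × Fin n)} {H : Type*}
  [NormedAddCommGroup H] [InnerProductSpace ℂ H] [CompleteSpace H]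

/-- A representation is of Cuntz type if both row-isometries are defect free. -/
def CuntzType (ρ : TwoGraphRep m n θ H) : Prop :=
  (∑ i, ρ.S i * star (ρ.S i)) = 1 ∧ (∑ j, ρ.T j * star (ρ.T j)) = 1

/-- The nonself-adjoint 2-graph algebra `𝔖`: the unital WOT-closed algebra generated by
the `S_i` and `T_j`. -/
def alg (ρ : TwoGraphRep m n θ H) : Set (H →L[ℂ] H) :=
  genWotAlg (Set.range ρ.S ∪ Set.range ρ.T)

/-- The von Neumann algebra generated by the `S_i` and `T_j`: the WOT-closure of the
unital *-algebra they generate. -/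
def vnAlg (ρ : TwoGraphRep m n θ H) : Set (H →L[ℂ] H) :=
  genWotAlg ((Set.range ρ.S ∪ Set.range ρ.T) ∪ star '' (Set.range ρ.S ∪ Set.range ρ.T))

/-- Wandering vector for the row-isometry `[S_u T_v : |u| = k, |v| = l]`. -/
def IsWanderingKL (ρ : TwoGraphRep m n θ H) (k l : ℕ) (ζ : H) : Prop :=
  ‖ζ‖ = 1 ∧ ∀ (p p' : ℕ) (u u' : List (Fin m)) (v v' : List (Fin n)),
    u.length = p * k → v.length = p * l → u'.length = p' * k → v'.length = p' * l →
    ⟪(wordOp ρ.S u * wordOp ρ.T v) ζ, (wordOp ρ.S u' * wordOp ρ.T v') ζ⟫ =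
      if u = u' ∧ v = v' then 1 else 0

/-- The range of the structure projection `P_{k,l}`: the orthogonal complement of the
closed linear span of the wandering vectors of `[S_u T_v : |u| = k, |v| = l]`. -/
def structSpaceKL (ρ : TwoGraphRep m n θ H) (k l : ℕ) : Submodule ℂ H :=
  ((Submodule.span ℂ {ζ : H | ρ.IsWanderingKL k l ζ}).topologicalClosure)ᗮ

/-- The range of the first structure projection `P = ⋀_{k,l>0} P_{k,l}`. -/
def firstStructSpace (ρ : TwoGraphRep m n θ H) : Submodule ℂ H :=
  ⨅ (k : ℕ) (l : ℕ) (_ : 0 < k) (_ : 0 < l), ρ.structSpaceKL k l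

/-- The row-isometry `[S_u T_v : |u| = k, |v| = l]`. -/
def rowKL (ρ : TwoGraphRep m n θ H) (k l : ℕ) :
    ((Fin k → Fin m) × (Fin l → Fin n)) → H →L[ℂ] H :=
  fun p => fnWordOp ρ.S p.1 * fnWordOp ρ.T p.2

/-- A wandering vector for the representation `(S,T)`. -/
def IsWanderingRep (ρ : TwoGraphRep m n θ H) (ζ : H) : Prop :=
  ‖ζ‖ = 1 ∧ ∀ (u u' : List (Fin m)) (v v' : List (Fin n)),
    ⟪(wordOp ρ.S u * wordOp ρ.T v) ζ, (wordOp ρ.S u' * wordOp ρ.T v') ζ⟫ =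
      if u = u' ∧ v = v' then 1 else 0

/-- The representation is irreducible: the only closed subspaces invariant under all
`S_i, T_j, S_i*, T_j*` are `⊥` and `⊤`. -/
def Irreducible (ρ : TwoGraphRep m n θ H) : Prop :=
  ∀ M : Submodule ℂ H, IsClosed (M : Set H) →
    (∀ i, ∀ x ∈ M, ρ.S i x ∈ M) → (∀ i, ∀ x ∈ M, star (ρ.S i) x ∈ M) →
    (∀ j, ∀ x ∈ M, ρ.T j x ∈ M) → (∀ j, ∀ x ∈ M, star (ρ.T j) x ∈ M) →
    M = ⊥ ∨ M = ⊤

/-- The representation is atomic with standard basis `ξ`: every generator maps each basis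
vector to a unimodular multiple of a basis vector. -/
def AtomicBasis {Λ : Type*} (ρ : TwoGraphRep m n θ H) (ξ : HilbertBasis Λ ℂ H) : Prop :=
  (∀ i t, ∃ (c : ℂ) (t' : Λ), ‖c‖ = 1 ∧ ρ.S i (ξ t) = c • ξ t') ∧
  (∀ j t, ∃ (c : ℂ) (t' : Λ), ‖c‖ = 1 ∧ ρ.T j (ξ t) = c • ξ t')

/-- `x` has a blue ring: `S_u x ∈ 𝕋x` for some nonempty word `u`. -/
def HasBlueRing (ρ : TwoGraphRep m n θ H) (x : H) : Prop :=
  ∃ u : List (Fin m), u ≠ [] ∧ ∃ c : ℂ, ‖c‖ = 1 ∧ wordOp ρ.S u x = c • x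

/-- `x` has a red ring: `T_v x ∈ 𝕋x` for some nonempty word `v`. -/
def HasRedRing (ρ : TwoGraphRep m n θ H) (x : H) : Prop :=
  ∃ v : List (Fin n), v ≠ [] ∧ ∃ c : ℂ, ‖c‖ = 1 ∧ wordOp ρ.T v x = c • x

/-- `x` has a mixed ring: `T_v S_u x ∈ 𝕋x` for some nonempty words `u`, `v`. -/
def HasMixedRing (ρ : TwoGraphRep m n θ H) (x : H) : Prop :=
  ∃ (u : List (Fin m)) (v : List (Fin n)), u ≠ [] ∧ v ≠ [] ∧
    ∃ c : ℂ, ‖c‖ = 1 ∧ wordOp ρ.T v (wordOp ρ.S u x) = c • x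

end TwoGraphRep

/-! The row `R = [S_u T_v : |u| = k, |v| = l]` is defect free, so every operator satisfies
`X = ∑ₚ (X Rₚ) Rₚ*`. For `X = S_i*` or `X = T_j*` each `X Rₚ` is a polynomial in the generators
(cancel the first letter, after using θ to move a `T` to the front), and `Rₚ* ∈ 𝔖_{k,l} ⊆ 𝔖`
by hypothesis. So the adjoints of the generators lie in `𝔖`, hence `𝔖* ⊆ 𝔖` because taking
adjoints commutes with WOT-closure. -/

section WotClosure

open Pointwise

variable {E : Type*} [NormedAddCommGroup E] [InnerProductSpace ℂ E]

lemma subset_wotClosure (S : Set (E →L[ℂ] E)) : S ⊆ wotClosure S :=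
  fun A hA _ hε _ => ⟨A, hA, fun _ _ => by simp [hε]⟩

lemma wotClosure_mono {S T : Set (E →L[ℂ] E)} (h : S ⊆ T) : wotClosure S ⊆ wotClosure T := by
  intro A hA ε hε F
  obtain ⟨B, hB, hAB⟩ := hA ε hε F
  exact ⟨B, h hB, hAB⟩

lemma norm_inner_add_apply_le (x y : E) (A B : E →L[ℂ] E) :
    ‖⟪x, (A + B) y⟫‖ ≤ ‖⟪x, A y⟫‖ + ‖⟪x, B y⟫‖ := by
  rw [add_apply, inner_add_right]
  exact norm_add_le _ _

lemma wotClosure_wotClosure (S : Set (E →L[ℂ] E)) : wotClosure (wotClosure S) = wotClosure S := by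
  refine (subset_wotClosure _).antisymm' fun A hA ε hε F => ?_
  obtain ⟨B, hB, hAB⟩ := hA (ε / 2) (by linarith) F
  obtain ⟨C, hC, hBC⟩ := hB (ε / 2) (by linarith) F
  refine ⟨C, hC, fun p hp => ?_⟩
  calc ‖⟪p.1, (A - C) p.2⟫‖ = ‖⟪p.1, ((A - B) + (B - C)) p.2⟫‖ := by rw [sub_add_sub_cancel]
    _ ≤ ‖⟪p.1, (A - B) p.2⟫‖ + ‖⟪p.1, (B - C) p.2⟫‖ := norm_inner_add_apply_le _ _ _ _
    _ < ε := by linarith [hAB p hp, hBC p hp]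

lemma add_mem_wotClosure {S : Set (E →L[ℂ] E)} (hS : ∀ a ∈ S, ∀ b ∈ S, a + b ∈ S)
    {A B : E →L[ℂ] E} (hA : A ∈ wotClosure S) (hB : B ∈ wotClosure S) :
    A + B ∈ wotClosure S := by
  intro ε hε F
  obtain ⟨A', hA', hAA'⟩ := hA (ε / 2) (by linarith) F
  obtain ⟨B', hB', hBB'⟩ := hB (ε / 2) (by linarith) F
  refine ⟨A' + B', hS _ hA' _ hB', fun p hp => ?_⟩
  calc ‖⟪p.1, (A + B - (A' + B')) p.2⟫‖ = ‖⟪p.1, ((A - A') + (B - B')) p.2⟫‖ := by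
        rw [add_sub_add_comm]
    _ ≤ ‖⟪p.1, (A - A') p.2⟫‖ + ‖⟪p.1, (B - B') p.2⟫‖ := norm_inner_add_apply_le _ _ _ _
    _ < ε := by linarith [hAA' p hp, hBB' p hp]

lemma subset_genWotAlg (G : Set (E →L[ℂ] E)) : G ⊆ genWotAlg G :=
  fun _ hg => subset_wotClosure _ (Algebra.subset_adjoin hg)

lemma genWotAlg_mono {G G' : Set (E →L[ℂ] E)}
    (h : G ⊆ (Algebra.adjoin ℂ G' : Subalgebra ℂ (E →L[ℂ] E))) :
    genWotAlg G ⊆ genWotAlg G' :=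
  wotClosure_mono (Algebra.adjoin_le h)

variable [CompleteSpace E]

/-- Multiplication is separately WOT-continuous: approximate `A` on the pairs `(x, B y)`, then
`B` on the pairs `(adjoint A' x, y)`. -/
lemma mul_mem_wotClosure {S : Set (E →L[ℂ] E)} (hS : ∀ a ∈ S, ∀ b ∈ S, a * b ∈ S)
    {A B : E →L[ℂ] E} (hA : A ∈ wotClosure S) (hB : B ∈ wotClosure S) :
    A * B ∈ wotClosure S := by
  intro ε hε F
  obtain ⟨A', hA', hAA'⟩ := hA (ε / 2) (by linarith) (F.image fun p => (p.1, B p.2))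
  obtain ⟨B', hB', hBB'⟩ := hB (ε / 2) (by linarith)
    (F.image fun p => (ContinuousLinearMap.adjoint A' p.1, p.2))
  refine ⟨A' * B', hS _ hA' _ hB', fun p hp => ?_⟩
  have hsplit : A * B - A' * B' = (A - A') * B + A' * (B - B') := by
    rw [sub_mul, mul_sub, sub_add_sub_cancel]
  have hleft := hAA' _ (Finset.mem_image_of_mem _ hp)
  have hright := hBB' _ (Finset.mem_image_of_mem _ hp)
  rw [ContinuousLinearMap.adjoint_inner_left] at hright
  calc ‖⟪p.1, (A * B - A' * B') p.2⟫‖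
      ≤ ‖⟪p.1, ((A - A') * B) p.2⟫‖ + ‖⟪p.1, (A' * (B - B')) p.2⟫‖ := by
        rw [hsplit]; exact norm_inner_add_apply_le _ _ _ _
    _ < ε := by
        simp only [mul_apply_eq_comp] at hleft hright ⊢
        linarith

lemma star_mem_wotClosure {S : Set (E →L[ℂ] E)} {A : E →L[ℂ] E} (hA : A ∈ wotClosure S) :
    star A ∈ wotClosure (star S) := by
  intro ε hε F
  obtain ⟨B, hB, hAB⟩ := hA ε hε (F.image Prod.swap)
  refine ⟨star B, by rwa [Set.mem_star, star_star], fun p hp => ?_⟩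
  rw [← star_sub, ContinuousLinearMap.star_eq_adjoint, ContinuousLinearMap.adjoint_inner_right,
    norm_inner_symm]
  exact hAB p.swap (Finset.mem_image_of_mem _ hp)

/-- `genWotAlg G` is by definition the carrier of `(Algebra.adjoin ℂ G).wotClosure`. -/
def Subalgebra.wotClosure (W : Subalgebra ℂ (E →L[ℂ] E)) : Subalgebra ℂ (E →L[ℂ] E) where
  carrier := _root_.wotClosure W
  mul_mem' := mul_mem_wotClosure fun _ ha _ hb => W.mul_mem ha hb
  add_mem' := add_mem_wotClosure fun _ ha _ hb => W.add_mem ha hb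
  algebraMap_mem' r := subset_wotClosure _ (W.algebraMap_mem r)

lemma star_mem_genWotAlg {G : Set (E →L[ℂ] E)} (hG : ∀ g ∈ G, star g ∈ genWotAlg G)
    {A : E →L[ℂ] E} (hA : A ∈ genWotAlg G) : star A ∈ genWotAlg G := by
  have hadjoin : Algebra.adjoin ℂ G ≤ star (Algebra.adjoin ℂ G).wotClosure :=
    Algebra.adjoin_le hG
  unfold genWotAlg
  rw [← wotClosure_wotClosure]
  refine wotClosure_mono (fun B hB => ?_) (star_mem_wotClosure hA)
  have hB' := hadjoin (Set.mem_star.mp hB)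
  rwa [Subalgebra.mem_star_iff, star_star] at hB'

end WotClosure

section RowIsometry

lemma mem_of_sum_mul_eq_one {R S ι : Type*} [Semiring R] [SetLike S R] [AddSubmonoidClass S R]
    [MulMemClass S R] [Fintype ι] {W : S} {V V' : ι → R} (hV : ∑ a, V a * V' a = 1) {X : R}
    (hXV : ∀ a, X * V a ∈ W) (hV' : ∀ a, V' a ∈ W) : X ∈ W := by
  rw [← mul_one X, ← hV, Finset.mul_sum]
  exact sum_mem fun a _ => mul_assoc X (V a) (V' a) ▸ mul_mem (hXV a) (hV' a)

lemma sum_mul_mul_star_eq_one {R α β : Type*} [Semiring R] [StarMul R] [Fintype α]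
    [Fintype β] {A : α → R} {B : β → R} (hA : ∑ a, A a * star (A a) = 1)
    (hB : ∑ b, B b * star (B b) = 1) :
    ∑ p : α × β, A p.1 * B p.2 * star (A p.1 * B p.2) = 1 := by
  rw [Fintype.sum_prod_type]
  calc ∑ a, ∑ b, A a * B b * star (A a * B b)
      = ∑ a, A a * (∑ b, B b * star (B b)) * star (A a) := by
        simp only [star_mul, Finset.mul_sum, Finset.sum_mul, mul_assoc]
    _ = 1 := by simpa [hB] using hA

variable {E : Type*} [NormedAddCommGroup E] [InnerProductSpace ℂ E] {ι : Type*}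

lemma wordOp_cons (V : ι → E →L[ℂ] E) (a : ι) (w : List ι) :
    wordOp V (a :: w) = V a * wordOp V w := by
  simp [wordOp]

lemma wordOp_mem {S : Type*} [SetLike S (E →L[ℂ] E)] [SubmonoidClass S (E →L[ℂ] E)] {W : S}
    {V : ι → E →L[ℂ] E} (hV : ∀ a, V a ∈ W) (w : List ι) : wordOp V w ∈ W :=
  list_prod_mem fun _ hx => by
    obtain ⟨a, -, rfl⟩ := List.mem_map.mp hx
    exact hV a

variable [CompleteSpace E] [Fintype ι]

lemma sum_fnWordOp_mul_star {V : ι → E →L[ℂ] E} (hV : ∑ a, V a * star (V a) = 1) (k : ℕ) :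
    ∑ u : Fin k → ι, fnWordOp V u * star (fnWordOp V u) = 1 := by
  induction k with
  | zero => simp [fnWordOp, wordOp]
  | succ k ih =>
    rw [← (Fin.consEquiv fun _ => ι).sum_comp, ← sum_mul_mul_star_eq_one hV ih]
    refine Finset.sum_congr rfl fun p _ => ?_
    simp [fnWordOp, Fin.consEquiv, List.ofFn_succ, wordOp_cons]

end RowIsometry

namespace TwoGraphRep

variable {m n : ℕ} {θ : Equiv.Perm (Fin m × Fin n)} {H : Type*}
  [NormedAddCommGroup H] [InnerProductSpace ℂ H] [CompleteSpace H]

lemma sum_rowKL_mul_star (ρ : TwoGraphRep m n θ H) (hC : ρ.CuntzType) (k l : ℕ) :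
    ∑ p, ρ.rowKL k l p * star (ρ.rowKL k l p) = 1 :=
  sum_mul_mul_star_eq_one (sum_fnWordOp_mul_star hC.1 k) (sum_fnWordOp_mul_star hC.2 l)

lemma exists_wordOp_S_mul_T (ρ : TwoGraphRep m n θ H) (u : List (Fin m)) (j : Fin n) :
    ∃ (j' : Fin n) (u' : List (Fin m)), wordOp ρ.S u * ρ.T j = ρ.T j' * wordOp ρ.S u' := by
  induction u generalizing j with
  | nil => exact ⟨j, [], by simp [wordOp]⟩
  | cons i u ih =>
    obtain ⟨j', u', hu⟩ := ih j
    refine ⟨(θ (i, j')).2, (θ (i, j')).1 :: u', ?_⟩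
    rw [wordOp_cons, wordOp_cons, mul_assoc, hu, ← mul_assoc, ρ.comm, mul_assoc]

lemma wordOp_S_mem_adjoin (ρ : TwoGraphRep m n θ H) (u : List (Fin m)) :
    wordOp ρ.S u ∈ Algebra.adjoin ℂ (Set.range ρ.S ∪ Set.range ρ.T) :=
  wordOp_mem (fun i => Algebra.subset_adjoin (Or.inl ⟨i, rfl⟩)) u

lemma wordOp_T_mem_adjoin (ρ : TwoGraphRep m n θ H) (v : List (Fin n)) :
    wordOp ρ.T v ∈ Algebra.adjoin ℂ (Set.range ρ.S ∪ Set.range ρ.T) :=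
  wordOp_mem (fun j => Algebra.subset_adjoin (Or.inr ⟨j, rfl⟩)) v

lemma rowKL_mem_adjoin (ρ : TwoGraphRep m n θ H) (k l : ℕ) :
    Set.range (ρ.rowKL k l) ⊆
      (Algebra.adjoin ℂ (Set.range ρ.S ∪ Set.range ρ.T) : Subalgebra ℂ (H →L[ℂ] H)) := by
  rintro _ ⟨p, rfl⟩
  exact mul_mem (ρ.wordOp_S_mem_adjoin _) (ρ.wordOp_T_mem_adjoin _)

lemma star_S_mul_wordOp_mem_adjoin (ρ : TwoGraphRep m n θ H) (i : Fin m) {u : List (Fin m)}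
    (hu : u ≠ []) (v : List (Fin n)) :
    star (ρ.S i) * (wordOp ρ.S u * wordOp ρ.T v) ∈
      Algebra.adjoin ℂ (Set.range ρ.S ∪ Set.range ρ.T) := by
  obtain ⟨i', u, rfl⟩ := List.exists_cons_of_ne_nil hu
  rw [wordOp_cons, ← mul_assoc, ← mul_assoc, ρ.isometS]
  split_ifs
  · simpa using mul_mem (ρ.wordOp_S_mem_adjoin u) (ρ.wordOp_T_mem_adjoin v)
  · simp

lemma star_T_mul_wordOp_mem_adjoin (ρ : TwoGraphRep m n θ H) (j : Fin n) (u : List (Fin m))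
    {v : List (Fin n)} (hv : v ≠ []) :
    star (ρ.T j) * (wordOp ρ.S u * wordOp ρ.T v) ∈
      Algebra.adjoin ℂ (Set.range ρ.S ∪ Set.range ρ.T) := by
  obtain ⟨j₀, v, rfl⟩ := List.exists_cons_of_ne_nil hv
  obtain ⟨j', u', hcomm⟩ := ρ.exists_wordOp_S_mul_T u j₀
  rw [wordOp_cons, ← mul_assoc (wordOp ρ.S u), hcomm, mul_assoc (ρ.T j'), ← mul_assoc,
    ρ.isometT]
  split_ifs
  · simpa using mul_mem (ρ.wordOp_S_mem_adjoin u') (ρ.wordOp_T_mem_adjoin v)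
  · simp

end TwoGraphRep

theorem statement14_general {m n : ℕ}
    {θ : Equiv.Perm (Fin m × Fin n)} {H : Type*}
    [NormedAddCommGroup H] [InnerProductSpace ℂ H] [CompleteSpace H]
    (ρ : TwoGraphRep m n θ H) (hCuntz : ρ.CuntzType)
    (k l : ℕ) (hk : 0 < k) (hl : 0 < l)
    (hsa : ∀ A ∈ genWotAlg (Set.range (ρ.rowKL k l)),
      star A ∈ genWotAlg (Set.range (ρ.rowKL k l))) :
    ∀ A ∈ ρ.alg, star A ∈ ρ.alg := by
  have hrow : ∀ p, star (ρ.rowKL k l p) ∈ ρ.alg := fun p =>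
    genWotAlg_mono (ρ.rowKL_mem_adjoin k l) (hsa _ (subset_genWotAlg _ ⟨p, rfl⟩))
  have hu : ∀ u : Fin k → Fin m, List.ofFn u ≠ [] := by simp [hk.ne']
  have hv : ∀ v : Fin l → Fin n, List.ofFn v ≠ [] := by simp [hl.ne']
  have hdecomp : ∀ X,
      (∀ p, X * ρ.rowKL k l p ∈ Algebra.adjoin ℂ (Set.range ρ.S ∪ Set.range ρ.T)) →
      X ∈ ρ.alg := fun X hX =>
    mem_of_sum_mul_eq_one (W := (Algebra.adjoin ℂ _).wotClosure)
      (ρ.sum_rowKL_mul_star hCuntz k l) (fun p => subset_wotClosure _ (hX p)) hrow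
  refine fun A => star_mem_genWotAlg ?_
  rintro _ (⟨i, rfl⟩ | ⟨j, rfl⟩)
  · exact hdecomp _ fun p => ρ.star_S_mul_wordOp_mem_adjoin i (hu p.1) _
  · exact hdecomp _ fun p => ρ.star_T_mul_wordOp_mem_adjoin j _ (hv p.2)

/-- If `𝔖_{k,l}` is self-adjoint for some `k, l > 0`, then `𝔖` is self-adjoint. -/
theorem statement14 {m n : ℕ} (hm : 0 < m) (hn : 0 < n) (hmn : 2 ≤ m ∨ 2 ≤ n)
    {θ : Equiv.Perm (Fin m × Fin n)} {H : Type*}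
    [NormedAddCommGroup H] [InnerProductSpace ℂ H] [CompleteSpace H]
    (ρ : TwoGraphRep m n θ H) (hCuntz : ρ.CuntzType)
    (k l : ℕ) (hk : 0 < k) (hl : 0 < l)
    (hsa : ∀ A ∈ genWotAlg (Set.range (ρ.rowKL k l)),
      star A ∈ genWotAlg (Set.range (ρ.rowKL k l))) :
    ∀ A ∈ ρ.alg, star A ∈ ρ.alg :=
  statement14_general ρ hCuntz k l hk hl hsa
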